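/- Let (m_n)_{n∈ℕ} be any sequence of positive reals. (a) If (k_n)_{n∈ℕ} is a sequence of positive integers with k_n ≥ m_n for all n and ∑_{n=0}^∞ (1 − m_n/k_n)^{∏_{i=0}^{n−1} k_i} = ∞ (with the empty product ∏_{i=0}^{−1} k_i := 1), then the BPVE with two-point offspring distributions ρ_n(k_n) := m_n/k_n, ρ_n(0) := 1 − m_n/k_n (and ρ_n(i) := 0 otherwise) dies out, i.e. p_e = 1. (b) For every sequence (m_n) of positive reals such a sequence (k_n) of positive integers exists; in particular, for every prescribed sequence of first moments (m_n) there is a BPVE with those first moments that dies out almost surely. -/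
import Mathlib


open Filter ENNReal

/-- Probability generating function `Φ_n(z) := ∑_i ρ_n(i) z^i` of the `n`-th offspring
distribution of a branching process in varying environment (BPVE). -/
noncomputable def Phi (ρ : ℕ → ℕ → ℝ) (n : ℕ) (z : ℝ) : ℝ :=
  ∑' i : ℕ, ρ n i * z ^ i

/-- The iterated generating functions `H_0(z) := z`, `H_{n+1} := H_n ∘ Φ_n`;
`H_n(0)` is the probability of extinction by generation `n`, and the extinction
probability is `p_e = lim_n H_n(0)`. -/
noncomputable def Hseq (ρ : ℕ → ℕ → ℝ) : ℕ → ℝ → ℝ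
  | 0 => fun z => z
  | n + 1 => fun z => Hseq ρ n (Phi ρ n z)

/-- First moment `m_n := ∑_i i ρ_n(i) ∈ [0,∞]` of the `n`-th offspring distribution. -/
noncomputable def mom (ρ : ℕ → ℕ → ℝ) (n : ℕ) : ℝ≥0∞ :=
  ∑' i : ℕ, (i : ℝ≥0∞) * ENNReal.ofReal (ρ n i)

/-- Second moment `m_n⁽²⁾ := ∑_i i² ρ_n(i) ∈ [0,∞]` of the `n`-th offspring
distribution. -/
noncomputable def mom2 (ρ : ℕ → ℕ → ℝ) (n : ℕ) : ℝ≥0∞ :=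
  ∑' i : ℕ, (i : ℝ≥0∞) ^ 2 * ENNReal.ofReal (ρ n i)

lemma pow_convex_aux (c t : ℝ) (hc0 : 0 ≤ c) (hc1 : c ≤ 1) (ht0 : 0 ≤ t)
    (ht1 : t ≤ 1) (k : ℕ) : c ^ k + (1 - c ^ k) * t ^ k ≤ (c + (1 - c) * t) ^ k := by
  induction k with
  | zero => simp
  | succ k ih =>
    have hw0 : 0 ≤ c + (1 - c) * t := by nlinarith
    have hwt : t ≤ c + (1 - c) * t := by nlinarith
    have hck1 : c ^ k ≤ 1 := pow_le_one₀ hc0 hc1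
    have hck0 : 0 ≤ c ^ k := pow_nonneg hc0 k
    have htk0 : 0 ≤ t ^ k := pow_nonneg ht0 k
    have htk1 : t ^ k ≤ 1 := pow_le_one₀ ht0 ht1
    have h1 := mul_le_mul_of_nonneg_left ih hw0
    have h2 : t * t ^ k ≤ (c + (1 - c) * t) * t ^ k := mul_le_mul_of_nonneg_right hwt htk0
    rw [pow_succ, pow_succ, pow_succ]
    nlinarith [mul_nonneg (mul_nonneg hck0 (sub_nonneg.2 hc1)) ht0,
      mul_nonneg (mul_nonneg hck0 (sub_nonneg.2 hc1)) (mul_nonneg ht0 htk0),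
      mul_le_mul_of_nonneg_right h2 (sub_nonneg.2 hck1)]

noncomputable def kaux (m : ℕ → ℝ) : ℕ → ℕ
  | n => max 1 ⌈2 * ((∏ i ∈ (Finset.range n).attach, kaux m i.1 : ℕ) : ℝ) * m n⌉₊
termination_by n => n
decreasing_by exact Finset.mem_range.mp i.2

/-- (a) for any positive reals `(m_n)` and positive integers `(k_n)`
with `k_n ≥ m_n` and `∑_n (1 − m_n/k_n)^{∏_{i<n} k_i} = ∞` (i.e. the series of
nonnegative terms is not summable), the BPVE with two-point offspring distributions
`ρ_n(k_n) = m_n/k_n`, `ρ_n(0) = 1 − m_n/k_n` dies out (`p_e = 1`);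
(b) for every sequence `(m_n)` of positive reals such a sequence `(k_n)` exists. -/
theorem two_point_bpve_extinction (m : ℕ → ℝ) (hm : ∀ n, 0 < m n) :
    (∀ k : ℕ → ℕ, (∀ n, 0 < k n) → (∀ n, m n ≤ k n) →
      ¬ Summable (fun n => (1 - m n / k n) ^ ∏ i ∈ Finset.range n, k i) →
      ∀ pe : ℝ,
        Tendsto
          (fun n => Hseq
            (fun n i => if i = k n then m n / k n else if i = 0 then 1 - m n / k n else 0)
            n 0) atTop (nhds pe) →
        pe = 1) ∧
    ∃ k : ℕ → ℕ, (∀ n, 0 < k n) ∧ (∀ n, m n ≤ k n) ∧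
      ¬ Summable (fun n => (1 - m n / k n) ^ ∏ i ∈ Finset.range n, k i) := by
  constructor
  · intro k hk hmk hsum pe hpe
    set ρ : ℕ → ℕ → ℝ :=
      fun n i => if i = k n then m n / k n else if i = 0 then 1 - m n / k n else 0 with hρ
    have hkpos : ∀ n, (0:ℝ) < k n := fun n => by exact_mod_cast hk n
    have hq0 : ∀ n, 0 < m n / k n := fun n => div_pos (hm n) (hkpos n)
    have hq1 : ∀ n, m n / k n ≤ 1 := fun n => (div_le_one (hkpos n)).mpr (hmk n)
    -- Phi formula
    have hPhi : ∀ n z, Phi ρ n z = (1 - m n / k n) + (m n / k n) * z ^ k n := by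
      intro n z
      have hkne : k n ≠ 0 := (hk n).ne'
      have hsupp : ∀ b ∉ ({0, k n} : Finset ℕ), ρ n b * z ^ b = 0 := by
        intro b hb
        simp only [Finset.mem_insert, Finset.mem_singleton, not_or] at hb
        simp [hρ, hb.1, hb.2]
      rw [Phi, tsum_eq_sum hsupp, Finset.sum_pair (Ne.symm hkne)]
      simp only [hρ, if_pos rfl, if_neg (Ne.symm hkne), if_pos rfl, pow_zero, mul_one, if_true, eq_self_iff_true]
    -- Phi maps [0,1] to [0,1] and is monotone there
    have hPhimem : ∀ n z, 0 ≤ z → z ≤ 1 → 0 ≤ Phi ρ n z ∧ Phi ρ n z ≤ 1 := by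
      intro n z h0 h1
      rw [hPhi]
      have hz0 : 0 ≤ z ^ k n := pow_nonneg h0 _
      have hz1 : z ^ k n ≤ 1 := pow_le_one₀ h0 h1
      constructor <;> nlinarith [hq0 n, hq1 n]
    have hPhimono : ∀ n x y, 0 ≤ x → x ≤ y → Phi ρ n x ≤ Phi ρ n y := by
      intro n x y h0 hxy
      rw [hPhi, hPhi]
      have := pow_le_pow_left₀ h0 hxy (k n)
      nlinarith [hq0 n]
    -- Hseq maps [0,1] to [0,1]
    have hHmem : ∀ n z, 0 ≤ z → z ≤ 1 → 0 ≤ Hseq ρ n z ∧ Hseq ρ n z ≤ 1 := by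
      intro n
      induction n with
      | zero => intro z h0 h1; exact ⟨h0, h1⟩
      | succ n ih =>
        intro z h0 h1
        have := hPhimem n z h0 h1
        exact ih _ this.1 this.2
    -- Hseq monotone on [0,1]
    have hHmono : ∀ n x y, 0 ≤ x → x ≤ y → y ≤ 1 → Hseq ρ n x ≤ Hseq ρ n y := by
      intro n
      induction n with
      | zero => intro x y _ h _; exact h
      | succ n ih =>
        intro x y h0 hxy h1
        exact ih _ _ (hPhimem n x h0 (hxy.trans h1)).1 (hPhimono n x y h0 hxy)
          (hPhimem n y (h0.trans hxy) h1).2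
    -- Key inequality (Claim G)
    have hG : ∀ n x t, 0 ≤ x → x ≤ 1 → 0 ≤ t → t ≤ 1 →
        Hseq ρ n x + (1 - Hseq ρ n x) * t ^ (∏ i ∈ Finset.range n, k i)
          ≤ Hseq ρ n (x + (1 - x) * t) := by
      intro n
      induction n with
      | zero =>
        intro x t _ _ _ _
        simp [Hseq]
      | succ n ih =>
        intro x t hx0 hx1 ht0 ht1
        have hq0n := hq0 n; have hq1n := hq1 n
        have hxk0 : 0 ≤ x ^ k n := pow_nonneg hx0 _
        have hxk1 : x ^ k n ≤ 1 := pow_le_one₀ hx0 hx1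
        have htk0 : 0 ≤ t ^ k n := pow_nonneg ht0 _
        have htk1 : t ^ k n ≤ 1 := pow_le_one₀ ht0 ht1
        -- X = Phi ρ n x
        have hX : Phi ρ n x = (1 - m n / k n) + (m n / k n) * x ^ k n := hPhi n x
        have hX0 : 0 ≤ Phi ρ n x := (hPhimem n x hx0 hx1).1
        have hX1 : Phi ρ n x ≤ 1 := (hPhimem n x hx0 hx1).2
        -- Phi at the combined point dominates X + (1-X) t^{k n}
        have hkey : Phi ρ n x + (1 - Phi ρ n x) * t ^ k n ≤ Phi ρ n (x + (1 - x) * t) := by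
          rw [hX, hPhi]
          have := pow_convex_aux x t hx0 hx1 ht0 ht1 (k n)
          nlinarith
        have hmix0 : 0 ≤ Phi ρ n x + (1 - Phi ρ n x) * t ^ k n := by nlinarith
        have hmixmem := hPhimem n (x + (1 - x) * t) (by nlinarith) (by nlinarith)
        have step1 : Hseq ρ n (Phi ρ n x + (1 - Phi ρ n x) * t ^ k n)
            ≤ Hseq ρ n (Phi ρ n (x + (1 - x) * t)) :=
          hHmono n _ _ hmix0 hkey hmixmem.2
        have step2 := ih (Phi ρ n x) (t ^ k n) hX0 hX1 htk0 htk1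
        have hexp : (t ^ k n) ^ (∏ i ∈ Finset.range n, k i)
            = t ^ (∏ i ∈ Finset.range (n + 1), k i) := by
          rw [← pow_mul, Finset.prod_range_succ, mul_comm]
        show Hseq ρ n (Phi ρ n x) + (1 - Hseq ρ n (Phi ρ n x)) * t ^ _ ≤ Hseq ρ n (Phi ρ n _)
        calc Hseq ρ n (Phi ρ n x)
              + (1 - Hseq ρ n (Phi ρ n x)) * t ^ (∏ i ∈ Finset.range (n+1), k i)
            = Hseq ρ n (Phi ρ n x)
              + (1 - Hseq ρ n (Phi ρ n x)) * (t ^ k n) ^ (∏ i ∈ Finset.range n, k i) := by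
              rw [hexp]
          _ ≤ Hseq ρ n (Phi ρ n x + (1 - Phi ρ n x) * t ^ k n) := step2
          _ ≤ _ := step1
    -- extinction recursion
    set u : ℕ → ℝ := fun n => 1 - Hseq ρ n 0 with hu
    set c : ℕ → ℝ := fun n => (1 - m n / k n) ^ ∏ i ∈ Finset.range n, k i with hc
    have hc0 : ∀ n, 0 ≤ c n := fun n => pow_nonneg (by linarith [hq1 n]) _
    have hu0 : ∀ n, 0 ≤ u n := fun n => by
      have := (hHmem n 0 le_rfl zero_le_one).2; simp [hu]; linarith
    have hrec : ∀ n, u (n + 1) ≤ u n * Real.exp (-(c n)) := by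
      intro n
      have hPhi0 : Phi ρ n 0 = 1 - m n / k n := by
        rw [hPhi]; rw [zero_pow (hk n).ne']; ring
      have hGn := hG n 0 (1 - m n / k n) le_rfl zero_le_one (by linarith [hq1 n])
        (by linarith [hq0 n])
      have h01 : (0:ℝ) + (1 - 0) * (1 - m n / k n) = 1 - m n / k n := by ring
      rw [h01] at hGn
      have hstep : u (n + 1) ≤ u n * (1 - c n) := by
        have : Hseq ρ (n + 1) 0 = Hseq ρ n (1 - m n / k n) := by
          show Hseq ρ n (Phi ρ n 0) = _; rw [hPhi0]
        simp only [hu, this]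
        nlinarith [hGn]
      have hexp : 1 - c n ≤ Real.exp (-(c n)) := by
        have := Real.add_one_le_exp (-(c n)); linarith
      calc u (n + 1) ≤ u n * (1 - c n) := hstep
        _ ≤ u n * Real.exp (-(c n)) := mul_le_mul_of_nonneg_left hexp (hu0 n)
    have hub : ∀ n, u n ≤ Real.exp (-(∑ j ∈ Finset.range n, c j)) := by
      intro n
      induction n with
      | zero => simp [hu, Hseq]
      | succ n ih =>
        calc u (n + 1) ≤ u n * Real.exp (-(c n)) := hrec n
          _ ≤ Real.exp (-(∑ j ∈ Finset.range n, c j)) * Real.exp (-(c n)) :=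
              mul_le_mul_of_nonneg_right ih (Real.exp_nonneg _)
          _ = Real.exp (-(∑ j ∈ Finset.range (n + 1), c j)) := by
              rw [← Real.exp_add, Finset.sum_range_succ]; congr 1; ring
    have hS : Tendsto (fun n => ∑ j ∈ Finset.range n, c j) atTop atTop :=
      (not_summable_iff_tendsto_nat_atTop_of_nonneg hc0).mp hsum
    have hE : Tendsto (fun n => Real.exp (-(∑ j ∈ Finset.range n, c j))) atTop (nhds 0) :=
      Real.tendsto_exp_atBot.comp (tendsto_neg_atTop_atBot.comp hS)
    have huz : Tendsto u atTop (nhds 0) :=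
      tendsto_of_tendsto_of_tendsto_of_le_of_le tendsto_const_nhds hE hu0 hub
    have hH1 : Tendsto (fun n => Hseq ρ n 0) atTop (nhds 1) := by
      have : Tendsto (fun n => 1 - u n) atTop (nhds (1 - 0)) := tendsto_const_nhds.sub huz
      simpa [hu] using this
    exact tendsto_nhds_unique hpe hH1
  · refine ⟨kaux m, ?_, ?_, ?_⟩ <;>
      [skip; skip; skip]
    · intro n; rw [kaux]; exact lt_of_lt_of_le one_pos (le_max_left _ _)
    all_goals
      have hk1 : ∀ n, 0 < kaux m n := fun n => by
        rw [kaux]; exact lt_of_lt_of_le one_pos (le_max_left _ _)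
      have hP1 : ∀ n, 1 ≤ ((∏ i ∈ Finset.range n, kaux m i : ℕ) : ℝ) := fun n => by
        exact_mod_cast Nat.one_le_iff_ne_zero.mpr (Finset.prod_ne_zero_iff.mpr
          fun i _ => (hk1 i).ne')
      have hk2 : ∀ n, 2 * ((∏ i ∈ Finset.range n, kaux m i : ℕ) : ℝ) * m n ≤ kaux m n := by
        intro n
        have h := Nat.le_ceil (2 * ((∏ i ∈ Finset.range n, kaux m i : ℕ) : ℝ) * m n)
        have h2 : (⌈2 * ((∏ i ∈ Finset.range n, kaux m i : ℕ) : ℝ) * m n⌉₊ : ℝ)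
            ≤ kaux m n := by
          rw [kaux, Finset.prod_attach]
          exact_mod_cast Nat.le_max_right 1 _
        linarith
      have hmk : ∀ n, m n ≤ kaux m n := fun n => by
        have := hk2 n; have := hP1 n; have := (hm n).le; nlinarith
    · exact hmk
    · intro hs
      have hlb : ∀ n, (1:ℝ)/2 ≤ (1 - m n / kaux m n) ^ ∏ i ∈ Finset.range n, kaux m i := by
        intro n
        have hkpos : (0:ℝ) < kaux m n := by exact_mod_cast hk1 n
        have hq1 : m n / kaux m n ≤ 1 := (div_le_one hkpos).mpr (hmk n)
        have hber := one_add_mul_le_pow (a := -(m n / kaux m n)) (by linarith [(div_nonneg (hm n).le hkpos.le)])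
          (∏ i ∈ Finset.range n, kaux m i)
        have hsmall : ((∏ i ∈ Finset.range n, kaux m i : ℕ) : ℝ) * (m n / kaux m n) ≤ 1/2 := by
          rw [← mul_div_assoc, div_le_iff₀ hkpos]
          nlinarith [hk2 n]
        have : (1:ℝ)/2 ≤ 1 + ((∏ i ∈ Finset.range n, kaux m i : ℕ) : ℝ) * (-(m n / kaux m n)) := by
          nlinarith
        calc (1:ℝ)/2 ≤ 1 + ((∏ i ∈ Finset.range n, kaux m i : ℕ) : ℝ) * (-(m n / kaux m n)) := this
          _ ≤ (1 + -(m n / kaux m n)) ^ ∏ i ∈ Finset.range n, kaux m i := by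
              simpa using hber
          _ = (1 - m n / kaux m n) ^ ∏ i ∈ Finset.range n, kaux m i := by ring_nf
      have h0 := hs.tendsto_atTop_zero
      have : (1:ℝ)/2 ≤ 0 := ge_of_tendsto h0 (Eventually.of_forall hlb)
      linarith
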